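/- arXiv:2405.20630 — 3 statements merged into one kernel-verified Lean document; each statement's English description precedes it below -/
import Mathlib

section
/- Let H be a real separable Hilbert space with a Hilbert basis (e_k)_{k∈ℕ}, let A : H → H and Q : H → H be bounded linear operators with Q self-adjoint, and let σ > 0. Suppose h : ℝ × H → ℝ is everywhere strictly positive, that for every (t,x) the partial time derivative ∂ₜh(t,x) exists, that for every t the map x ↦ h(t,x) has a gradient ∇h(t,·) : H → H which is Fréchet differentiable at every x with derivative D∇h(t,x) : H → H, that for every (t,x) the family k ↦ ⟪D∇h(t,x)(Q e_k), e_k⟫ is summable, and that h satisfies the Kolmogorov backward equation ∂ₜh(t,x) + ⟪A x, ∇h(t,x)⟫ + (σ²/2)·∑_k ⟪D∇h(t,x)(Q e_k), e_k⟫ = 0 for all (t,x). Define V(t,x) := −log h(t,x). Then for every (t,x): ∂ₜV(t,x) exists, x ↦ V(t,x) has a Fréchet-differentiable gradient ∇V(t,·) with derivative D∇V(t,x), the family k ↦ ⟪D∇V(t,x)(Q e_k), e_k⟫ is summable, and V satisfies the Hamilton–Jacobi–Bellman equation ∂ₜV(t,x) + ⟪A x, ∇V(t,x)⟫ + (σ²/2)·∑_k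 ⟪D∇V(t,x)(Q e_k), e_k⟫ − (σ²/2)·⟪Q ∇V(t,x), ∇V(t,x)⟫ = 0. -/
open scoped RealInnerProductSpace
open InnerProductSpace

/-- **Hopf–Cole transform in a real separable Hilbert space** (Theorem 1 of the paper).
If the everywhere-positive function `h` solves the Kolmogorov backward equation
`∂ₜh + ⟪A x, ∇h⟫ + (σ²/2)·Tr[Q D∇h] = 0`, then `V = −log h` solves the HJB equation
`∂ₜV + ⟪A x, ∇V⟫ + (σ²/2)·Tr[Q D∇V] − (σ²/2)·⟪Q ∇V, ∇V⟫ = 0`. -/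
theorem stmt_0
    {H : Type*} [NormedAddCommGroup H] [InnerProductSpace ℝ H] [CompleteSpace H]
    (e : HilbertBasis ℕ ℝ H)
    (A Q : H →L[ℝ] H) (hQsa : IsSelfAdjoint Q)
    (σ : ℝ) (hσ : 0 < σ)
    (h : ℝ → H → ℝ) (hpos : ∀ t x, 0 < h t x)
    (ht : ℝ → H → ℝ) (hht : ∀ t x, HasDerivAt (fun s => h s x) (ht t x) t)
    (gh : ℝ → H → H) (hgh : ∀ t x, HasGradientAt (h t) (gh t x) x)
    (Dgh : ℝ → H → (H →L[ℝ] H)) (hDgh : ∀ t x, HasFDerivAt (gh t) (Dgh t x) x)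
    (hsum : ∀ t x, Summable (fun k => ⟪Dgh t x (Q (e k)), e k⟫))
    (hKBE : ∀ t x, ht t x + ⟪A x, gh t x⟫
        + σ ^ 2 / 2 * ∑' k, ⟪Dgh t x (Q (e k)), e k⟫ = 0) :
    ∃ (Vt : ℝ → H → ℝ) (gV : ℝ → H → H) (DgV : ℝ → H → (H →L[ℝ] H)),
      (∀ t x, HasDerivAt (fun s => -Real.log (h s x)) (Vt t x) t) ∧
      (∀ t x, HasGradientAt (fun y => -Real.log (h t y)) (gV t x) x) ∧
      (∀ t x, HasFDerivAt (gV t) (DgV t x) x) ∧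
      (∀ t x, Summable (fun k => ⟪DgV t x (Q (e k)), e k⟫)) ∧
      (∀ t x, Vt t x + ⟪A x, gV t x⟫
        + σ ^ 2 / 2 * ∑' k, ⟪DgV t x (Q (e k)), e k⟫
        - σ ^ 2 / 2 * ⟪Q (gV t x), gV t x⟫ = 0) := by
  have hne : ∀ t x, h t x ≠ 0 := fun t x => (hpos t x).ne'
  have hsym : ∀ u v, ⟪Q u, v⟫ = ⟪u, Q v⟫ :=
    ContinuousLinearMap.isSelfAdjoint_iff_isSymmetric.mp hQsa
  refine ⟨fun t x => -(ht t x / h t x),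
          fun t x => (-(h t x)⁻¹) • gh t x,
          fun t x => (-(h t x)⁻¹) • Dgh t x
            + ((((h t x) ^ 2)⁻¹) • (toDual ℝ H (gh t x) : H →L[ℝ] ℝ)).smulRight (gh t x),
          ?_, ?_, ?_, ?_, ?_⟩
  · intro t x
    exact ((hht t x).log (hne t x)).neg
  · intro t x
    have hf : HasFDerivAt (h t) (toDual ℝ H (gh t x) : H →L[ℝ] ℝ) x :=
      (hgh t x).hasFDerivAt
    have hlog : HasDerivAt Real.log (h t x)⁻¹ (h t x) :=
      Real.hasDerivAt_log (hne t x)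
    have hcomp : HasFDerivAt (fun y => Real.log (h t y))
        ((h t x)⁻¹ • (toDual ℝ H (gh t x) : H →L[ℝ] ℝ)) x :=
      hlog.comp_hasFDerivAt x hf
    have hneg := hcomp.neg
    rw [hasGradientAt_iff_hasFDerivAt]
    convert hneg using 1
    all_goals ext v
    all_goals simp [real_inner_smul_left]
  · intro t x
    have hf : HasFDerivAt (h t) (toDual ℝ H (gh t x) : H →L[ℝ] ℝ) x :=
      (hgh t x).hasFDerivAt
    have hinv : HasFDerivAt (fun y => (h t y)⁻¹)
        ((-((h t x) ^ 2)⁻¹) • (toDual ℝ H (gh t x) : H →L[ℝ] ℝ)) x :=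
      (hasDerivAt_inv (hne t x)).comp_hasFDerivAt x hf
    have hninv := hinv.neg
    have hprod := hninv.smul (hDgh t x)
    convert hprod using 1
    all_goals ext v
    all_goals simp [ContinuousLinearMap.smulRight_apply, real_inner_smul_left]
  · intro t x
    have key : ∀ k, ⟪((-(h t x)⁻¹) • Dgh t x
            + ((((h t x) ^ 2)⁻¹) • (toDual ℝ H (gh t x) : H →L[ℝ] ℝ)).smulRight (gh t x)) (Q (e k)), e k⟫
        = (-(h t x)⁻¹) * ⟪Dgh t x (Q (e k)), e k⟫
          + ((h t x) ^ 2)⁻¹ * (⟪Q (gh t x), e k⟫ * ⟪e k, gh t x⟫) := by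
      intro k
      simp only [ContinuousLinearMap.add_apply, ContinuousLinearMap.coe_smul',
        Pi.smul_apply, ContinuousLinearMap.smulRight_apply, inner_add_left,
        real_inner_smul_left, smul_eq_mul, toDual_apply_apply]
      rw [hsym, real_inner_comm (e k) (gh t x)]
      ring
    simp only [key]
    exact ((hsum t x).mul_left _).add
      ((e.summable_inner_mul_inner (Q (gh t x)) (gh t x)).mul_left _)
  · intro t x
    have key : ∀ k, ⟪((-(h t x)⁻¹) • Dgh t x
            + ((((h t x) ^ 2)⁻¹) • (toDual ℝ H (gh t x) : H →L[ℝ] ℝ)).smulRight (gh t x)) (Q (e k)), e k⟫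
        = (-(h t x)⁻¹) * ⟪Dgh t x (Q (e k)), e k⟫
          + ((h t x) ^ 2)⁻¹ * (⟪Q (gh t x), e k⟫ * ⟪e k, gh t x⟫) := by
      intro k
      simp only [ContinuousLinearMap.add_apply, ContinuousLinearMap.coe_smul',
        Pi.smul_apply, ContinuousLinearMap.smulRight_apply, inner_add_left,
        real_inner_smul_left, smul_eq_mul, toDual_apply_apply]
      rw [hsym, real_inner_comm (e k) (gh t x)]
      ring
    have htsum : ∑' k, ⟪((-(h t x)⁻¹) • Dgh t x
            + ((((h t x) ^ 2)⁻¹) • (toDual ℝ H (gh t x) : H →L[ℝ] ℝ)).smulRight (gh t x)) (Q (e k)), e k⟫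
        = (-(h t x)⁻¹) * (∑' k, ⟪Dgh t x (Q (e k)), e k⟫)
          + ((h t x) ^ 2)⁻¹ * ⟪Q (gh t x), gh t x⟫ := by
      rw [tsum_congr key,
        Summable.tsum_add ((hsum t x).mul_left _)
          ((e.summable_inner_mul_inner (Q (gh t x)) (gh t x)).mul_left _),
        tsum_mul_left, tsum_mul_left, e.tsum_inner_mul_inner]
    rw [htsum]
    have hQsmul : ⟪Q ((-(h t x)⁻¹) • gh t x), (-(h t x)⁻¹) • gh t x⟫
        = (h t x)⁻¹ * (h t x)⁻¹ * ⟪Q (gh t x), gh t x⟫ := by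
      rw [map_smul, real_inner_smul_left, real_inner_smul_right]
      ring
    rw [hQsmul, real_inner_smul_right]
    have hk := hKBE t x
    have h0 : (h t x) ≠ 0 := hne t x
    linear_combination (-(h t x)⁻¹) * hk
end

section
/- Fix real numbers a > 0, λ > 0, σ > 0, T > 0 and y ∈ ℝ, and define h : {t : ℝ | t < T} × ℝ → ℝ by h(t, x) := q_{T−t}(x, y), where q_τ(x, y) := (1 − e^{−2aτ})^{−1/2} · exp(−(y − e^{−aτ}x)²/(2v_τ) + y²/(2v_∞)). Then for every t < T and every x ∈ ℝ, h is differentiable in t, twice differentiable in x, and satisfies the Kolmogorov backward equation ∂ₜh(t, x) − a·x·∂ₓh(t, x) + (σ²λ/2)·∂²ₓₓh(t, x) = 0. -/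
/-- `v_t = (σ²λ/(2a))(1 − e^{−2at})`, the time-`t` variance of the OU process. -/
noncomputable def vt (a lam σ t : ℝ) : ℝ :=
  σ ^ 2 * lam / (2 * a) * (1 - Real.exp (-2 * a * t))

/-- `v_∞ = σ²λ/(2a)`, the invariant variance of the OU process. -/
noncomputable def vinf (a lam σ : ℝ) : ℝ := σ ^ 2 * lam / (2 * a)

/-- `q_τ(x, y) = (1 − e^{−2aτ})^{−1/2} · exp(−(y − e^{−aτ}x)²/(2v_τ) + y²/(2v_∞))`. -/
noncomputable def qt (a lam σ t x y : ℝ) : ℝ :=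
  (1 - Real.exp (-2 * a * t)) ^ (-(1 : ℝ) / 2) *
    Real.exp (-(y - Real.exp (-a * t) * x) ^ 2 / (2 * vt a lam σ t)
      + y ^ 2 / (2 * vinf a lam σ))

lemma qt_eq (a lam σ τ x y : ℝ) :
    qt a lam σ τ x y =
      (1 - Real.exp (-a * τ) ^ 2) ^ (-(1 : ℝ) / 2) *
        Real.exp (-(y - Real.exp (-a * τ) * x) ^ 2 /
            (2 * (σ ^ 2 * lam / (2 * a) * (1 - Real.exp (-a * τ) ^ 2)))
          + y ^ 2 / (2 * (σ ^ 2 * lam / (2 * a)))) := by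
  have h : Real.exp (-2 * a * τ) = Real.exp (-a * τ) ^ 2 := by
    rw [sq, ← Real.exp_add]; ring_nf
  rw [qt, vt, vinf, h]

lemma hasDerivAt_qt_x (c u w K y x : ℝ) (hc : c ≠ 0) (hw : w ≠ 0) :
    HasDerivAt (fun z => w ^ (-(1 : ℝ) / 2) * Real.exp (-(y - u * z) ^ 2 / (2 * (c * w)) + K))
      ((w ^ (-(1 : ℝ) / 2) * Real.exp (-(y - u * x) ^ 2 / (2 * (c * w)) + K)) *
        (u * (y - u * x) / (c * w))) x := by
  have h0 : HasDerivAt (fun z : ℝ => y - u * z) (-u) x := by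
    simpa using ((hasDerivAt_id x).const_mul u).const_sub y
  have h1 : HasDerivAt (fun z : ℝ => -(y - u * z) ^ 2 / (2 * (c * w)) + K)
      (u * (y - u * x) / (c * w)) x := by
    have := (((h0.pow 2).neg).div_const (2 * (c * w))).add_const K
    refine this.congr_deriv ?_
    push_cast
    field_simp
  have := h1.exp.const_mul (w ^ (-(1 : ℝ) / 2))
  refine this.congr_deriv ?_
  ring

/-- One-coordinate Kolmogorov backward equation (equation (7) of the paper):
`h(t, x) := q_{T−t}(x, y)` satisfies `∂ₜh − a·x·∂ₓh + (σ²λ/2)·∂²ₓₓh = 0` for `t < T`. -/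
theorem stmt_12 (a lam σ T y : ℝ) (ha : 0 < a) (hlam : 0 < lam) (hσ : 0 < σ) :
    ∀ t < T, ∀ x : ℝ,
      DifferentiableAt ℝ (fun s => qt a lam σ (T - s) x y) t ∧
      DifferentiableAt ℝ (fun z => qt a lam σ (T - t) z y) x ∧
      DifferentiableAt ℝ (deriv fun z => qt a lam σ (T - t) z y) x ∧
      deriv (fun s => qt a lam σ (T - s) x y) t
        - a * x * deriv (fun z => qt a lam σ (T - t) z y) x
        + σ ^ 2 * lam / 2 * deriv (deriv fun z => qt a lam σ (T - t) z y) x = 0 := by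
  intro t ht x
  have hτ : 0 < T - t := by linarith
  simp only [qt_eq]
  set c : ℝ := σ ^ 2 * lam / (2 * a) with hc_def
  have hc : 0 < c := by positivity
  set u : ℝ := Real.exp (-a * (T - t)) with hu_def
  have hu0 : 0 < u := Real.exp_pos _
  have hu1 : u < 1 := by
    rw [hu_def]
    exact Real.exp_lt_one_iff.mpr (by nlinarith)
  set w : ℝ := 1 - u ^ 2 with hw_def
  have hw : 0 < w := by rw [hw_def]; nlinarith
  set K : ℝ := y ^ 2 / (2 * c) with hK_def
  -- spatial derivatives
  have hX := hasDerivAt_qt_x c u w K y x hc.ne' hw.ne'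
  have hderiv_eq : (deriv fun z =>
      w ^ (-(1 : ℝ) / 2) * Real.exp (-(y - u * z) ^ 2 / (2 * (c * w)) + K)) =
      fun z => (w ^ (-(1 : ℝ) / 2) * Real.exp (-(y - u * z) ^ 2 / (2 * (c * w)) + K)) *
        (u * (y - u * z) / (c * w)) :=
    funext fun z => (hasDerivAt_qt_x c u w K y z hc.ne' hw.ne').deriv
  have hD : HasDerivAt (fun z => u * (y - u * z) / (c * w)) (u * -u / (c * w)) x := by
    have h0 : HasDerivAt (fun z : ℝ => y - u * z) (-u) x := by
      simpa using ((hasDerivAt_id x).const_mul u).const_sub y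
    exact (h0.const_mul u).div_const (c * w)
  have hXX := hX.mul hD
  -- time derivative
  have hlin : HasDerivAt (fun s : ℝ => -a * (T - s)) a t := by
    have := (((hasDerivAt_id t).const_sub T).const_mul (-a))
    refine this.congr_deriv ?_
    simp
  have hU : HasDerivAt (fun s => Real.exp (-a * (T - s))) (u * a) t := hlin.exp
  have hW : HasDerivAt (fun s => 1 - Real.exp (-a * (T - s)) ^ 2) (-(2 * a * u ^ 2)) t := by
    have := (hU.pow 2).const_sub 1
    refine this.congr_deriv ?_
    push_cast
    ring
  have hA : HasDerivAt (fun s => (1 - Real.exp (-a * (T - s)) ^ 2) ^ (-(1 : ℝ) / 2))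
      (-(2 * a * u ^ 2) * (-(1 : ℝ) / 2) * w ^ (-(1 : ℝ) / 2 - 1)) t := by
    have := hW.rpow_const (p := -(1 : ℝ) / 2) (Or.inl hw.ne')
    exact this
  have hY : HasDerivAt (fun s => y - Real.exp (-a * (T - s)) * x) (-(u * a * x)) t :=
    (hU.mul_const x).const_sub y
  have hN : HasDerivAt (fun s => -(y - Real.exp (-a * (T - s)) * x) ^ 2)
      (2 * (y - u * x) * (u * a * x)) t := by
    have := (hY.pow 2).neg
    refine this.congr_deriv ?_
    push_cast
    ring
  have hM : HasDerivAt (fun s => 2 * (c * (1 - Real.exp (-a * (T - s)) ^ 2)))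
      (2 * (c * -(2 * a * u ^ 2))) t := (hW.const_mul c).const_mul 2
  have hMne : (fun s => 2 * (c * (1 - Real.exp (-a * (T - s)) ^ 2))) t ≠ 0 := by
    show 2 * (c * w) ≠ 0
    positivity
  have hQ : HasDerivAt (fun s => -(y - Real.exp (-a * (T - s)) * x) ^ 2 /
        (2 * (c * (1 - Real.exp (-a * (T - s)) ^ 2))) + K)
      ((2 * (y - u * x) * (u * a * x) * (2 * (c * w)) -
          -(y - u * x) ^ 2 * (2 * (c * -(2 * a * u ^ 2)))) / (2 * (c * w)) ^ 2) t :=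
    (hN.div hM hMne).add_const K
  have hT' : HasDerivAt (fun s =>
      (1 - Real.exp (-a * (T - s)) ^ 2) ^ (-(1 : ℝ) / 2) *
        Real.exp (-(y - Real.exp (-a * (T - s)) * x) ^ 2 /
            (2 * (c * (1 - Real.exp (-a * (T - s)) ^ 2))) + K))
      (-(2 * a * u ^ 2) * (-(1 : ℝ) / 2) * w ^ (-(1 : ℝ) / 2 - 1) *
          Real.exp (-(y - u * x) ^ 2 / (2 * (c * w)) + K)
        + w ^ (-(1 : ℝ) / 2) *
          (Real.exp (-(y - u * x) ^ 2 / (2 * (c * w)) + K) *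
            ((2 * (y - u * x) * (u * a * x) * (2 * (c * w)) -
              -(y - u * x) ^ 2 * (2 * (c * -(2 * a * u ^ 2)))) / (2 * (c * w)) ^ 2))) t :=
    hA.mul hQ.exp
  refine ⟨hT'.differentiableAt, hX.differentiableAt, ?_, ?_⟩
  · rw [hderiv_eq]; exact hXX.differentiableAt
  · rw [hderiv_eq, hT'.deriv, HasDerivAt.deriv (f := fun z => w ^ (-(1 : ℝ) / 2) * Real.exp (-(y - u * z) ^ 2 / (2 * (c * w)) + K) * (u * (y - u * z) / (c * w))) hXX]
    beta_reduce
    have hac : σ ^ 2 * lam / 2 = a * c := by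
      rw [hc_def]; field_simp
    have hpow : w ^ (-(1 : ℝ) / 2 - 1) = w ^ (-(1 : ℝ) / 2) / w := by
      rw [Real.rpow_sub hw, Real.rpow_one]
    rw [hac, hpow]
    set A : ℝ := w ^ (-(1 : ℝ) / 2)
    set E : ℝ := Real.exp (-(y - u * x) ^ 2 / (2 * (c * w)) + K)
    field_simp
    ring
end

section
/- Fix real numbers a > 0, λ > 0, σ > 0, T > 0 and y ∈ ℝ, and define V : {t : ℝ | t < T} × ℝ → ℝ by V(t, x) := −log q_{T−t}(x, y), where q_τ(x, y) := (1 − e^{−2aτ})^{−1/2} · exp(−(y − e^{−aτ}x)²/(2v_τ) + y²/(2v_∞)). Then for every t < T and every x ∈ ℝ, V is differentiable in t, twice differentiable in x, and satisfies the Hamilton–Jacobi–Bellman equation ∂ₜV(t, x) − a·x·∂ₓV(t, x) + (σ²λ/2)·∂²ₓₓV(t, x) − (σ²λ/2)·(∂ₓV(t, x))² = 0. -/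
lemma neg_log_qt (a lam σ : ℝ) {τ : ℝ} (ha : 0 < a) (hτ : 0 < τ) (x y : ℝ) :
    -Real.log (qt a lam σ τ x y) =
      (1/2) * Real.log (1 - Real.exp (-2 * a * τ)) +
        ((y - Real.exp (-a * τ) * x) ^ 2 /
            (2 * (σ ^ 2 * lam / (2 * a) * (1 - Real.exp (-2 * a * τ))))
          - y ^ 2 / (2 * (σ ^ 2 * lam / (2 * a)))) := by
  have hw : 0 < 1 - Real.exp (-2 * a * τ) := by
    have : Real.exp (-2 * a * τ) < 1 := by
      rw [Real.exp_lt_one_iff]; nlinarith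
    linarith
  unfold qt vt vinf
  rw [Real.log_mul (ne_of_gt (Real.rpow_pos_of_pos hw _)) (Real.exp_pos _).ne',
      Real.log_rpow hw, Real.log_exp]
  ring

/-- One-coordinate HJB equation (equation (9) of the paper): the value function
`V(t, x) := −log q_{T−t}(x, y)` satisfies
`∂ₜV − a·x·∂ₓV + (σ²λ/2)·∂²ₓₓV − (σ²λ/2)·(∂ₓV)² = 0` for `t < T`. -/
theorem stmt_13 (a lam σ T y : ℝ) (ha : 0 < a) (hlam : 0 < lam) (hσ : 0 < σ) :
    ∀ t < T, ∀ x : ℝ,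
      DifferentiableAt ℝ (fun s => -Real.log (qt a lam σ (T - s) x y)) t ∧
      DifferentiableAt ℝ (fun z => -Real.log (qt a lam σ (T - t) z y)) x ∧
      DifferentiableAt ℝ (deriv fun z => -Real.log (qt a lam σ (T - t) z y)) x ∧
      deriv (fun s => -Real.log (qt a lam σ (T - s) x y)) t
        - a * x * deriv (fun z => -Real.log (qt a lam σ (T - t) z y)) x
        + σ ^ 2 * lam / 2 * deriv (deriv fun z => -Real.log (qt a lam σ (T - t) z y)) x
        - σ ^ 2 * lam / 2 * (deriv (fun z => -Real.log (qt a lam σ (T - t) z y)) x) ^ 2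
        = 0 := by
  intro t ht x
  have hτ : 0 < T - t := by linarith
  set E : ℝ := Real.exp (-a * (T - t)) with hE
  set E2 : ℝ := Real.exp (-2 * a * (T - t)) with hE2
  have hE2eq : E2 = E * E := by
    rw [hE2, hE, ← Real.exp_add]; ring_nf
  have hw : 0 < 1 - E2 := by
    have : Real.exp (-2 * a * (T - t)) < 1 := by
      rw [Real.exp_lt_one_iff]; nlinarith
    simpa [hE2] using (by linarith : (0:ℝ) < 1 - Real.exp (-2 * a * (T - t)))
  set c : ℝ := σ ^ 2 * lam / (2 * a) with hc
  have hcpos : 0 < c := by positivity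
  -- x-direction
  have hgx : (fun z => -Real.log (qt a lam σ (T - t) z y)) =
      fun z => (1/2) * Real.log (1 - E2) +
        ((y - E * z) ^ 2 / (2 * (c * (1 - E2))) - y ^ 2 / (2 * c)) := by
    funext z
    exact neg_log_qt a lam σ ha hτ z y
  have hx1 : ∀ z : ℝ, HasDerivAt
      (fun z => (1/2) * Real.log (1 - E2) +
        ((y - E * z) ^ 2 / (2 * (c * (1 - E2))) - y ^ 2 / (2 * c)))
      (2 * (y - E * z) * (-E) / (2 * (c * (1 - E2)))) z := by
    intro z
    have h1 : HasDerivAt (fun z : ℝ => y - E * z) (-E) z := by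
      simpa using ((hasDerivAt_id z).const_mul E).const_sub y
    have h2 : HasDerivAt (fun z : ℝ => (y - E * z) ^ 2) (2 * (y - E * z) * (-E)) z := by
      simpa using h1.fun_pow 2
    have h3 := (h2.div_const (2 * (c * (1 - E2)))).sub_const (y ^ 2 / (2 * c))
    simpa using h3.const_add ((1/2) * Real.log (1 - E2))
  have hderiv_x : deriv (fun z => -Real.log (qt a lam σ (T - t) z y)) =
      fun z => 2 * (y - E * z) * (-E) / (2 * (c * (1 - E2))) := by
    rw [hgx]; funext z; exact (hx1 z).deriv
  have hx2 : HasDerivAt (fun z : ℝ => 2 * (y - E * z) * (-E) / (2 * (c * (1 - E2))))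
      (2 * (-E) * (-E) / (2 * (c * (1 - E2)))) x := by
    have h1 : HasDerivAt (fun z : ℝ => y - E * z) (-E) x := by
      simpa using ((hasDerivAt_id x).const_mul E).const_sub y
    have h2 : HasDerivAt (fun z : ℝ => 2 * (y - E * z) * (-E)) (2 * (-E) * (-E)) x := by
      simpa [mul_comm, mul_assoc, mul_left_comm] using ((h1.const_mul 2).mul_const (-E))
    exact h2.div_const _
  -- t-direction
  have hfs : (fun s => -Real.log (qt a lam σ (T - s) x y)) =ᶠ[nhds t]
      fun s => (1/2) * Real.log (1 - Real.exp (-2 * a * (T - s))) +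
        ((y - Real.exp (-a * (T - s)) * x) ^ 2 /
            (2 * (c * (1 - Real.exp (-2 * a * (T - s)))))
          - y ^ 2 / (2 * c)) := by
    filter_upwards [Iio_mem_nhds ht] with s hs
    exact neg_log_qt a lam σ ha (sub_pos.mpr (Set.mem_Iio.mp hs)) x y
  have hE2t : HasDerivAt (fun s : ℝ => Real.exp (-2 * a * (T - s))) (E2 * (2 * a)) t := by
    have h1 : HasDerivAt (fun s : ℝ => -2 * a * (T - s)) (2 * a) t := by
      have := ((hasDerivAt_id t).const_sub T).const_mul (-2 * a)
      simpa using this.congr_deriv (by ring)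
    simpa [hE2] using h1.exp
  have hEt : HasDerivAt (fun s : ℝ => Real.exp (-a * (T - s))) (E * a) t := by
    have h1 : HasDerivAt (fun s : ℝ => -a * (T - s)) a t := by
      have := ((hasDerivAt_id t).const_sub T).const_mul (-a)
      simpa using this.congr_deriv (by ring)
    simpa [hE] using h1.exp
  have hwt : HasDerivAt (fun s : ℝ => 1 - Real.exp (-2 * a * (T - s))) (-(E2 * (2 * a))) t :=
    hE2t.const_sub 1
  have hlogt : HasDerivAt (fun s : ℝ => (1/2) * Real.log (1 - Real.exp (-2 * a * (T - s))))
      ((1/2) * (-(E2 * (2 * a)) / (1 - E2))) t := by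
    exact (hwt.log hw.ne').const_mul (1/2)
  have hut : HasDerivAt (fun s : ℝ => (y - Real.exp (-a * (T - s)) * x) ^ 2)
      (2 * (y - E * x) * (-(E * a * x))) t := by
    have h1 : HasDerivAt (fun s : ℝ => y - Real.exp (-a * (T - s)) * x) (-(E * a * x)) t := by
      simpa [mul_assoc] using (hEt.mul_const x).const_sub y
    simpa [hE] using h1.fun_pow 2
  have hDt : HasDerivAt (fun s : ℝ => 2 * (c * (1 - Real.exp (-2 * a * (T - s)))))
      (2 * (c * (-(E2 * (2 * a))))) t := by
    exact (hwt.const_mul c).const_mul 2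
  have hDne : 2 * (c * (1 - Real.exp (-2 * a * (T - t)))) ≠ 0 := by
    have : 0 < 2 * (c * (1 - E2)) := by positivity
    simpa [hE2] using this.ne'
  have hfrac : HasDerivAt (fun s : ℝ => (y - Real.exp (-a * (T - s)) * x) ^ 2 /
      (2 * (c * (1 - Real.exp (-2 * a * (T - s))))))
      ((2 * (y - E * x) * (-(E * a * x)) * (2 * (c * (1 - E2)))
        - (y - E * x) ^ 2 * (2 * (c * (-(E2 * (2 * a)))))) / (2 * (c * (1 - E2))) ^ 2) t := by
    have := hut.fun_div hDt hDne
    simpa [hE, hE2] using this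
  have hft : HasDerivAt
      (fun s => (1/2) * Real.log (1 - Real.exp (-2 * a * (T - s))) +
        ((y - Real.exp (-a * (T - s)) * x) ^ 2 /
            (2 * (c * (1 - Real.exp (-2 * a * (T - s)))))
          - y ^ 2 / (2 * c)))
      ((1/2) * (-(E2 * (2 * a)) / (1 - E2)) +
        (2 * (y - E * x) * (-(E * a * x)) * (2 * (c * (1 - E2)))
          - (y - E * x) ^ 2 * (2 * (c * (-(E2 * (2 * a)))))) / (2 * (c * (1 - E2))) ^ 2) t :=
    hlogt.add (hfrac.sub_const _)
  have hdiff_t : DifferentiableAt ℝ (fun s => -Real.log (qt a lam σ (T - s) x y)) t :=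
    hfs.differentiableAt_iff.mpr hft.differentiableAt
  have hderiv_t : deriv (fun s => -Real.log (qt a lam σ (T - s) x y)) t =
      (1/2) * (-(E2 * (2 * a)) / (1 - E2)) +
        (2 * (y - E * x) * (-(E * a * x)) * (2 * (c * (1 - E2)))
          - (y - E * x) ^ 2 * (2 * (c * (-(E2 * (2 * a)))))) / (2 * (c * (1 - E2))) ^ 2 := by
    rw [hfs.deriv_eq]; exact hft.deriv
  refine ⟨hdiff_t, ?_, ?_, ?_⟩
  · rw [hgx]; exact (hx1 x).differentiableAt
  · rw [hderiv_x]; exact hx2.differentiableAt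
  · rw [hderiv_t, hderiv_x, hx2.deriv]
    have hcs : σ ^ 2 * lam = 2 * a * c := by rw [hc]; field_simp
    rw [hcs, hE2eq]
    have hwne : 1 - E * E ≠ 0 := by rw [← hE2eq]; exact hw.ne'
    have hane : a ≠ 0 := ha.ne'
    have hcne : c ≠ 0 := hcpos.ne'
    clear_value E E2 c
    field_simp [hwne, hane, hcne]
    ring
end
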